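/- If a line ℓ, not a maximal line of a GC_n set X, passes through exactly k nodes of X that each lie on exactly one maximal line of X (1_m-nodes), then the ℓ-lowering X̂(ℓ) of X is a GC_s set with s = def(X) + k − 2, where def(X) = n + 2 − #M(X). -/

import Mathlib

attribute [local instance] Classical.propDecidable

/-- Evaluate a bivariate polynomial at a point of the plane. -/
noncomputable def evalPt (p : MvPolynomial (Fin 2) ℝ) (A : ℝ × ℝ) : ℝ :=
  MvPolynomial.eval ![A.1, A.2] p

/-- A (polynomial defining a) line: a bivariate polynomial of total degree exactly 1. -/
def IsLinearPoly (l : MvPolynomial (Fin 2) ℝ) : Prop := l.totalDegree = 1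

/-- A point lies on the line defined by `l`. -/
def OnLine (l : MvPolynomial (Fin 2) ℝ) (A : ℝ × ℝ) : Prop := evalPt l A = 0

/-- Two degree-1 polynomials define the same line (same zero set). -/
def SameLine (l₁ l₂ : MvPolynomial (Fin 2) ℝ) : Prop := ∀ P, OnLine l₁ P ↔ OnLine l₂ P

/-- `X` is an `n`-correct set of nodes in the plane. -/
def NCorrect (n : ℕ) (X : Finset (ℝ × ℝ)) : Prop :=
  X.card = (n + 2) * (n + 1) / 2 ∧
  ∀ c : (ℝ × ℝ) → ℝ, ∃! p : MvPolynomial (Fin 2) ℝ,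
    p.totalDegree ≤ n ∧ ∀ A ∈ X, evalPt p A = c A

/-- `p` is the `n`-fundamental polynomial of node `A` in `X`. -/
def IsFundamental (n : ℕ) (X : Finset (ℝ × ℝ)) (A : ℝ × ℝ)
    (p : MvPolynomial (Fin 2) ℝ) : Prop :=
  p.totalDegree ≤ n ∧ evalPt p A = 1 ∧ ∀ B ∈ X, B ≠ A → evalPt p B = 0

/-- Node `A` of `X` uses line `l`. -/
def Uses (n : ℕ) (X : Finset (ℝ × ℝ)) (A : ℝ × ℝ) (l : MvPolynomial (Fin 2) ℝ) : Prop :=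
  ∃ p, IsFundamental n X A p ∧ l ∣ p

/-- The set of nodes of `X` using the line `l` (the set `Xˡ`). -/
noncomputable def UsedSet (n : ℕ) (X : Finset (ℝ × ℝ)) (l : MvPolynomial (Fin 2) ℝ) :
    Finset (ℝ × ℝ) := X.filter (fun A => Uses n X A l)

/-- `l` is a maximal line of `X`: a line passing through exactly `n+1` nodes. -/
def IsMaximalLine (n : ℕ) (X : Finset (ℝ × ℝ)) (l : MvPolynomial (Fin 2) ℝ) : Prop :=
  IsLinearPoly l ∧ (X.filter (fun A => OnLine l A)).card = n + 1

/-- `X` is a `GC_n` set. -/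
def GCSet (n : ℕ) (X : Finset (ℝ × ℝ)) : Prop :=
  NCorrect n X ∧
  ∀ A ∈ X, ∃ f : Fin n → MvPolynomial (Fin 2) ℝ,
    (∀ i, IsLinearPoly (f i)) ∧ IsFundamental n X A (∏ i, f i)

/-- `L` is a set of representatives (one per line) of all maximal lines of `X`. -/
def MaximalLinesRep (n : ℕ) (X : Finset (ℝ × ℝ))
    (L : Finset (MvPolynomial (Fin 2) ℝ)) : Prop :=
  (∀ l ∈ L, IsMaximalLine n X l) ∧
  (∀ l₁ ∈ L, ∀ l₂ ∈ L, SameLine l₁ l₂ → l₁ = l₂) ∧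
  (∀ l, IsMaximalLine n X l → ∃ l' ∈ L, SameLine l l')

/-- A maximal line `lam` is `l`-disjoint: it meets `l` at no node of `X`. -/
def IsDisjointMax (n : ℕ) (X : Finset (ℝ × ℝ)) (l lam : MvPolynomial (Fin 2) ℝ) : Prop :=
  IsMaximalLine n X lam ∧ ∀ A ∈ X, ¬(OnLine lam A ∧ OnLine l A)

/-- A maximal line `lam` is a member of a pair of `l`-adjoint maximal lines. -/
def IsAdjointMax (n : ℕ) (X : Finset (ℝ × ℝ)) (l lam : MvPolynomial (Fin 2) ℝ) : Prop :=
  IsMaximalLine n X lam ∧ ∃ lam', IsMaximalLine n X lam' ∧ ¬SameLine lam lam' ∧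
    ∃ A ∈ X, OnLine lam A ∧ OnLine lam' A ∧ OnLine l A

/-- The `l`-lowering `X̂(l)` of `X`. -/
noncomputable def Lowering (n : ℕ) (X : Finset (ℝ × ℝ)) (l : MvPolynomial (Fin 2) ℝ) :
    Finset (ℝ × ℝ) :=
  X.filter (fun A => ¬ ∃ lam, (IsDisjointMax n X l lam ∨ IsAdjointMax n X l lam) ∧ OnLine lam A)

/-- A node `A` is a `1_m`-node of `X` w.r.t. the maximal-line representatives `L`:
it lies on exactly one maximal line. -/
def Is1mNode (L : Finset (MvPolynomial (Fin 2) ℝ)) (A : ℝ × ℝ) : Prop :=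
  (L.filter (fun l => OnLine l A)).card = 1

/-- `k` lines in general position: no two parallel (any two meet in exactly one point),
no three concurrent. -/
def InGenPos (k : ℕ) (f : Fin k → MvPolynomial (Fin 2) ℝ) : Prop :=
  (∀ i, IsLinearPoly (f i)) ∧
  (∀ i j, i ≠ j → ∃! P : ℝ × ℝ, OnLine (f i) P ∧ OnLine (f j) P) ∧
  (∀ i j m, i ≠ j → j ≠ m → i ≠ m →
    ¬ ∃ P : ℝ × ℝ, OnLine (f i) P ∧ OnLine (f j) P ∧ OnLine (f m) P)

/-- `X` is a Chung-Yao lattice of degree `m`. -/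
def IsChungYao (m : ℕ) (X : Finset (ℝ × ℝ)) : Prop :=
  ∃ f : Fin (m + 2) → MvPolynomial (Fin 2) ℝ, InGenPos (m + 2) f ∧
    ∀ P : ℝ × ℝ, P ∈ X ↔ ∃ i j, i ≠ j ∧ OnLine (f i) P ∧ OnLine (f j) P
/-!
A maximal line `λ` of a `GC_{m+1}` set carries `m + 2` nodes, so it is a factor of the fundamental
polynomial of every node off `λ`; dropping that factor gives fundamental polynomials of degree `m`
in the remaining set, and uniqueness of interpolation descends: if `p` vanishes on the remaining
nodes, then `λ p` vanishes on `X`, so `p = 0`. Hence removing a maximal line lowers the degree by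
one. Two maximal lines meet at exactly one node, so the other maximal lines stay maximal and the
lines removed by the `ℓ`-lowering can be removed one at a time. A maximal line is kept exactly when
it meets `ℓ` at a `1_m`-node, and this is a bijection, so the lowering removes `#M(X) - k` lines.
-/

open MvPolynomial Finset

lemma evalPt_mul (p q : MvPolynomial (Fin 2) ℝ) (A : ℝ × ℝ) :
    evalPt (p * q) A = evalPt p A * evalPt q A :=
  map_mul _ p q

lemma evalPt_smul (c : ℝ) (p : MvPolynomial (Fin 2) ℝ) (A : ℝ × ℝ) :
    evalPt (c • p) A = c * evalPt p A :=
  smul_eval _ _ _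

lemma evalPt_prod {ι : Type*} (s : Finset ι) (f : ι → MvPolynomial (Fin 2) ℝ) (A : ℝ × ℝ) :
    evalPt (∏ i ∈ s, f i) A = ∏ i ∈ s, evalPt (f i) A :=
  map_prod _ f s

lemma exists_affine_of_totalDegree_le_one {p : MvPolynomial (Fin 2) ℝ} (hp : p.totalDegree ≤ 1) :
    ∃ a b c : ℝ, ∀ A : ℝ × ℝ, evalPt p A = a * A.1 + b * A.2 + c := by
  refine ⟨∑ d ∈ p.support, coeff d p * d 0, ∑ d ∈ p.support, coeff d p * d 1,
    ∑ d ∈ p.support, coeff d p * (1 - d 0 - d 1 : ℝ), fun A => ?_⟩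
  rw [evalPt, eval_eq', sum_mul, sum_mul, ← sum_add_distrib, ← sum_add_distrib]
  refine sum_congr rfl fun d hd => ?_
  have hdeg : d 0 + d 1 ≤ 1 := by
    have := (le_totalDegree hd).trans hp
    rwa [Finsupp.sum_fintype _ _ fun _ => rfl, Fin.sum_univ_two] at this
  have : d 0 = 0 ∧ d 1 = 0 ∨ d 0 = 1 ∧ d 1 = 0 ∨ d 0 = 0 ∧ d 1 = 1 := by omega
  rcases this with ⟨h0, h1⟩ | ⟨h0, h1⟩ | ⟨h0, h1⟩ <;> simp [Fin.prod_univ_two, h0, h1]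

lemma IsLinearPoly.ne_zero {l : MvPolynomial (Fin 2) ℝ} (hl : IsLinearPoly l) : l ≠ 0 := by
  rintro rfl
  simp [IsLinearPoly] at hl

lemma IsLinearPoly.exists_affine {l : MvPolynomial (Fin 2) ℝ} (hl : IsLinearPoly l) :
    ∃ a b c : ℝ, (a ≠ 0 ∨ b ≠ 0) ∧ ∀ A : ℝ × ℝ, evalPt l A = a * A.1 + b * A.2 + c := by
  obtain ⟨a, b, c, hev⟩ := exists_affine_of_totalDegree_le_one hl.le
  refine ⟨a, b, c, ?_, hev⟩
  by_contra! hab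
  have hconst : l = C c := MvPolynomial.funext fun x => by
    have hx : ![x 0, x 1] = x := by ext i; fin_cases i <;> rfl
    simpa [evalPt, hab.1, hab.2, hx] using hev (x 0, x 1)
  have := hl
  rw [IsLinearPoly, hconst, totalDegree_C] at this
  exact zero_ne_one this

lemma IsLinearPoly.smul {l : MvPolynomial (Fin 2) ℝ} (hl : IsLinearPoly l) {c : ℝ} (hc : c ≠ 0) :
    IsLinearPoly (c • l) := by
  refine le_antisymm ((totalDegree_smul_le c l).trans_eq hl) ?_
  calc 1 = l.totalDegree := hl.symm
    _ = (c⁻¹ • c • l).totalDegree := by rw [inv_smul_smul₀ hc]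
    _ ≤ (c • l).totalDegree := totalDegree_smul_le _ _

lemma totalDegree_prod_le_of_isLinearPoly {m : ℕ} {f : Fin m → MvPolynomial (Fin 2) ℝ}
    (hf : ∀ i, IsLinearPoly (f i)) : (∏ i, f i).totalDegree ≤ m :=
  (totalDegree_finsetProd _ _).trans_eq <| by
    simp only [show ∀ i, (f i).totalDegree = 1 from hf, sum_const, card_univ, Fintype.card_fin,
      smul_eq_mul, mul_one]

lemma IsLinearPoly.onLine_iff {l : MvPolynomial (Fin 2) ℝ} (hl : IsLinearPoly l) {P Q : ℝ × ℝ}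
    (hPQ : P ≠ Q) (hP : OnLine l P) (hQ : OnLine l Q) (R : ℝ × ℝ) :
    OnLine l R ↔ (R.1 - P.1) * (Q.2 - P.2) = (R.2 - P.2) * (Q.1 - P.1) := by
  obtain ⟨a, b, c, hab, hev⟩ := hl.exists_affine
  simp only [OnLine, hev] at hP hQ ⊢
  constructor
  · intro hR
    rcases hab with ha | hb
    · refine mul_left_cancel₀ ha ?_
      linear_combination (Q.2 - P.2) * (hR - hP) - (R.2 - P.2) * (hQ - hP)
    · refine mul_left_cancel₀ hb ?_
      linear_combination (R.1 - P.1) * (hQ - hP) - (Q.1 - P.1) * (hR - hP)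
  · intro hR
    have hd : Q.1 - P.1 ≠ 0 ∨ Q.2 - P.2 ≠ 0 := by
      by_contra! h
      exact hPQ (Prod.ext (by linarith [h.1]) (by linarith [h.2]))
    rcases hd with hd | hd
    · refine mul_left_cancel₀ hd ?_
      linear_combination (Q.1 - P.1) * hP + (R.1 - P.1) * (hQ - hP) - b * hR
    · refine mul_left_cancel₀ hd ?_
      linear_combination (Q.2 - P.2) * hP + (R.2 - P.2) * (hQ - hP) + a * hR

lemma sameLine_of_two_common {l₁ l₂ : MvPolynomial (Fin 2) ℝ} (h₁ : IsLinearPoly l₁)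
    (h₂ : IsLinearPoly l₂) {P Q : ℝ × ℝ} (hPQ : P ≠ Q) (hP₁ : OnLine l₁ P) (hQ₁ : OnLine l₁ Q)
    (hP₂ : OnLine l₂ P) (hQ₂ : OnLine l₂ Q) : SameLine l₁ l₂ :=
  fun R => (h₁.onLine_iff hPQ hP₁ hQ₁ R).trans (h₂.onLine_iff hPQ hP₂ hQ₂ R).symm

lemma eq_of_onLine_of_not_sameLine {l₁ l₂ : MvPolynomial (Fin 2) ℝ} (h₁ : IsLinearPoly l₁)
    (h₂ : IsLinearPoly l₂) (hns : ¬ SameLine l₁ l₂) {P Q : ℝ × ℝ} (hP₁ : OnLine l₁ P)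
    (hQ₁ : OnLine l₁ Q) (hP₂ : OnLine l₂ P) (hQ₂ : OnLine l₂ Q) : P = Q := by
  by_contra hPQ
  exact hns (sameLine_of_two_common h₁ h₂ hPQ hP₁ hQ₁ hP₂ hQ₂)

lemma IsMaximalLine.of_sameLine {n : ℕ} {X : Finset (ℝ × ℝ)} {l₁ l₂ : MvPolynomial (Fin 2) ℝ}
    (h : IsMaximalLine n X l₁) (hs : SameLine l₁ l₂) (h₂ : IsLinearPoly l₂) :
    IsMaximalLine n X l₂ :=
  ⟨h₂, h.2 ▸ congrArg card (filter_congr fun A _ => (hs A).symm)⟩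

lemma exists_sameLine_of_prod_eq_zero {m : ℕ} {f : Fin m → MvPolynomial (Fin 2) ℝ}
    (hf : ∀ i, IsLinearPoly (f i)) {lam : MvPolynomial (Fin 2) ℝ} (hlam : IsLinearPoly lam)
    {S : Finset (ℝ × ℝ)} (hS : ∀ B ∈ S, OnLine lam B) (hcard : m < S.card)
    (hvan : ∀ B ∈ S, evalPt (∏ i, f i) B = 0) : ∃ i, SameLine (f i) lam := by
  have hfac : ∀ B ∈ S, ∃ i, OnLine (f i) B := fun B hB => by
    obtain ⟨i, -, hi⟩ := prod_eq_zero_iff.mp ((evalPt_prod _ _ _).symm.trans (hvan B hB))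
    exact ⟨i, hi⟩
  obtain ⟨B₀, hB₀⟩ := card_pos.1 ((Nat.zero_le m).trans_lt hcard)
  have : Nonempty (Fin m) := ⟨(hfac B₀ hB₀).choose⟩
  choose! g hg using hfac
  obtain ⟨B, hB, B', hB', hne, heq⟩ := exists_ne_map_eq_of_card_lt_of_maps_to
    (t := (univ : Finset (Fin m))) (by simpa using hcard) fun B _ => mem_coe.2 (mem_univ (g B))
  exact ⟨g B, sameLine_of_two_common (hf _) hlam hne (hg B hB) (heq ▸ hg B' hB') (hS B hB)
    (hS B' hB')⟩

lemma exists_fundamental_prod {m : ℕ} {Y : Finset (ℝ × ℝ)} {A : ℝ × ℝ}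
    {g : Fin m → MvPolynomial (Fin 2) ℝ} (hg : ∀ j, IsLinearPoly (g j))
    (hA : evalPt (∏ j, g j) A ≠ 0) (hY : ∀ B ∈ Y, B ≠ A → evalPt (∏ j, g j) B = 0) :
    ∃ g' : Fin m → MvPolynomial (Fin 2) ℝ,
      (∀ j, IsLinearPoly (g' j)) ∧ IsFundamental m Y A (∏ j, g' j) := by
  set c := evalPt (∏ j, g j) A
  obtain ⟨g', hg', hprod⟩ : ∃ g' : Fin m → MvPolynomial (Fin 2) ℝ,
      (∀ j, IsLinearPoly (g' j)) ∧ ∏ j, g' j = c⁻¹ • ∏ j, g j := by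
    cases m with
    | zero => exact ⟨g, hg, by simp [c, evalPt]⟩
    | succ m =>
      refine ⟨Fin.cons (c⁻¹ • g 0) (Fin.tail g), Fin.cases ((hg 0).smul (inv_ne_zero hA))
        fun j => hg j.succ, ?_⟩
      rw [Fin.prod_cons, Fin.prod_univ_succ g, smul_mul_assoc]
      rfl
  refine ⟨g', hg', totalDegree_prod_le_of_isLinearPoly hg', ?_, fun B hB hBA => ?_⟩
  · rw [hprod, evalPt_smul, inv_mul_cancel₀ hA]
  · rw [hprod, evalPt_smul, hY B hB hBA, mul_zero]

lemma NCorrect.eq_zero {m : ℕ} {Y : Finset (ℝ × ℝ)} (hY : NCorrect m Y)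
    {p : MvPolynomial (Fin 2) ℝ} (hp : p.totalDegree ≤ m) (hv : ∀ A ∈ Y, evalPt p A = 0) :
    p = 0 :=
  (hY.2 fun _ => 0).unique ⟨hp, hv⟩ ⟨by simp, fun A _ => by simp [evalPt]⟩

lemma NCorrect.eq_zero_of_eq_zero_off_line {m : ℕ} {X : Finset (ℝ × ℝ)} (hX : NCorrect (m + 1) X)
    {lam : MvPolynomial (Fin 2) ℝ} (hlam : IsLinearPoly lam) {p : MvPolynomial (Fin 2) ℝ}
    (hp : p.totalDegree ≤ m) (hv : ∀ A ∈ X, ¬ OnLine lam A → evalPt p A = 0) : p = 0 := by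
  have hdeg : (lam * p).totalDegree ≤ m + 1 :=
    (totalDegree_mul _ _).trans (by rw [hlam]; omega)
  have hlp : lam * p = 0 := hX.eq_zero hdeg fun A hA => by
    by_cases h : OnLine lam A
    · rw [evalPt_mul, h, zero_mul]
    · rw [evalPt_mul, hv A hA h, mul_zero]
  exact (mul_eq_zero.1 hlp).resolve_left hlam.ne_zero

lemma nCorrect_of_fundamental {m : ℕ} {Y : Finset (ℝ × ℝ)}
    (hcard : Y.card = (m + 2) * (m + 1) / 2) (hfund : ∀ A ∈ Y, ∃ p, IsFundamental m Y A p)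
    (hvan : ∀ p : MvPolynomial (Fin 2) ℝ, p.totalDegree ≤ m → (∀ A ∈ Y, evalPt p A = 0) → p = 0) :
    NCorrect m Y := by
  refine ⟨hcard, fun c => ?_⟩
  choose! q hq using hfund
  have hdeg : (∑ A ∈ Y, c A • q A).totalDegree ≤ m :=
    (totalDegree_finsetSum _ _).trans <|
      Finset.sup_le fun A hA => (totalDegree_smul_le _ _).trans (hq A hA).1
  have heval : ∀ B ∈ Y, evalPt (∑ A ∈ Y, c A • q A) B = c B := fun B hB => by
    rw [evalPt, map_sum, sum_eq_single B (fun A hA hAB => ?_) (absurd hB)]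
    · rw [← evalPt, evalPt_smul, (hq B hB).2.1, mul_one]
    · rw [← evalPt, evalPt_smul, (hq A hA).2.2 B hB (Ne.symm hAB), mul_zero]
  refine ⟨_, ⟨hdeg, heval⟩, fun p ⟨hp, hpc⟩ => sub_eq_zero.1 <| hvan _ ?_ fun B hB => ?_⟩
  · exact (totalDegree_sub _ _).trans (max_le hp hdeg)
  · simp only [evalPt, map_sub] at hpc heval ⊢
    rw [hpc B hB, heval B hB, sub_self]

lemma GCSet.exists_fundamental_prod_filter_not_onLine {m : ℕ} {X : Finset (ℝ × ℝ)}
    (hX : GCSet (m + 1) X) {lam : MvPolynomial (Fin 2) ℝ} (hlam : IsMaximalLine (m + 1) X lam)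
    {A : ℝ × ℝ} (hA : A ∈ X) (hAlam : ¬ OnLine lam A) :
    ∃ g : Fin m → MvPolynomial (Fin 2) ℝ,
      (∀ j, IsLinearPoly (g j)) ∧ IsFundamental m (X.filter (¬ OnLine lam ·)) A (∏ j, g j) := by
  obtain ⟨f, hf, -, hfA, hf0⟩ := hX.2 A hA
  -- the `m + 2` nodes on `lam` force `lam` to be one of the `m + 1` factors
  obtain ⟨i, hi⟩ := exists_sameLine_of_prod_eq_zero hf hlam.1 (S := X.filter (OnLine lam ·))
    (fun B hB => (mem_filter.1 hB).2) (by rw [hlam.2]; omega)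
    fun B hB => hf0 B (mem_filter.1 hB).1 (by rintro rfl; exact hAlam (mem_filter.1 hB).2)
  have hsplit : ∀ B, evalPt (∏ j, f j) B =
      evalPt (f i) B * evalPt (∏ j, f (i.succAbove j)) B := fun B => by
    rw [Fin.prod_univ_succAbove _ i, evalPt_mul]
  refine exists_fundamental_prod (fun j => hf _)
    (right_ne_zero_of_mul (hsplit A ▸ hfA ▸ one_ne_zero)) fun B hB hBA => ?_
  obtain ⟨hBX, hBlam⟩ := mem_filter.1 hB
  exact (mul_eq_zero.1 ((hsplit B).symm.trans (hf0 B hBX hBA))).resolve_left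
    fun h => hBlam ((hi B).1 h)

lemma GCSet.filter_not_onLine {m : ℕ} {X : Finset (ℝ × ℝ)} (hX : GCSet (m + 1) X)
    {lam : MvPolynomial (Fin 2) ℝ} (hlam : IsMaximalLine (m + 1) X lam) :
    GCSet m (X.filter (¬ OnLine lam ·)) := by
  have hfund : ∀ A ∈ X.filter (¬ OnLine lam ·), ∃ g : Fin m → MvPolynomial (Fin 2) ℝ,
      (∀ j, IsLinearPoly (g j)) ∧ IsFundamental m (X.filter (¬ OnLine lam ·)) A (∏ j, g j) :=
    fun A hA => hX.exists_fundamental_prod_filter_not_onLine hlam (mem_filter.1 hA).1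
      (mem_filter.1 hA).2
  refine ⟨nCorrect_of_fundamental ?_ (fun A hA => let ⟨_, hg⟩ := hfund A hA; ⟨_, hg.2⟩)
    fun p hp hv => ?_, hfund⟩
  · have hsplit := card_filter_add_card_filter_not (s := X) (OnLine lam ·)
    rw [hlam.2, hX.1.1] at hsplit
    have : (m + 1 + 2) * (m + 1 + 1) = (m + 2) * (m + 1) + 2 * (m + 2) := by ring
    omega
  · exact hX.1.eq_zero_of_eq_zero_off_line hlam.1 hp fun A hA h => hv A (mem_filter.2 ⟨hA, h⟩)

lemma GCSet.card_filter_onLine_le {m : ℕ} {Y : Finset (ℝ × ℝ)} (hY : GCSet m Y)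
    {lam : MvPolynomial (Fin 2) ℝ} (hlam : IsLinearPoly lam) :
    (Y.filter (OnLine lam ·)).card ≤ m + 1 := by
  by_contra! hcard
  obtain ⟨B, hB⟩ : (Y.filter (OnLine lam ·)).Nonempty := card_pos.mp (by omega)
  obtain ⟨f, hf, -, hfB, hf0⟩ := hY.2 B (mem_filter.1 hB).1
  -- `lam` would be a factor of the fundamental polynomial of `B`, yet `B` lies on `lam`
  obtain ⟨i, hi⟩ := exists_sameLine_of_prod_eq_zero hf hlam
    (S := (Y.filter (OnLine lam ·)).erase B) (fun C hC => (mem_filter.1 (mem_of_mem_erase hC)).2)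
    (by rw [card_erase_of_mem hB]; omega)
    fun C hC => hf0 C (mem_filter.1 (mem_of_mem_erase hC)).1 (ne_of_mem_erase hC)
  have hfB' : evalPt (∏ j, f j) B = 0 := by
    rw [evalPt_prod]
    exact prod_eq_zero (mem_univ i) ((hi B).2 (mem_filter.1 hB).2)
  exact zero_ne_one (hfB'.symm.trans hfB)

lemma GCSet.exists_mem_onLine_onLine {m : ℕ} {X : Finset (ℝ × ℝ)} (hX : GCSet (m + 1) X)
    {l₁ l₂ : MvPolynomial (Fin 2) ℝ} (h₁ : IsMaximalLine (m + 1) X l₁)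
    (h₂ : IsMaximalLine (m + 1) X l₂) : ∃ A ∈ X, OnLine l₁ A ∧ OnLine l₂ A := by
  by_contra! hdisj
  have hle := (hX.filter_not_onLine h₁).card_filter_onLine_le h₂.1
  have hnodes : X.filter (fun A => ¬ OnLine l₁ A ∧ OnLine l₂ A) = X.filter (OnLine l₂ ·) :=
    filter_congr fun A hA => ⟨And.right, fun h₂A => ⟨fun h₁A => hdisj A hA h₁A h₂A, h₂A⟩⟩
  rw [filter_filter, hnodes, h₂.2] at hle
  omega

lemma IsMaximalLine.filter_not_onLine {m : ℕ} {X : Finset (ℝ × ℝ)}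
    {lam μ : MvPolynomial (Fin 2) ℝ} (hlam : IsMaximalLine (m + 1) X lam) (hX : GCSet (m + 1) X)
    (hμ : IsMaximalLine (m + 1) X μ) (hns : ¬ SameLine lam μ) :
    IsMaximalLine m (X.filter (¬ OnLine μ ·)) lam := by
  obtain ⟨A, hAX, hAμ, hAlam⟩ := hX.exists_mem_onLine_onLine hμ hlam
  have hA : (X.filter (OnLine lam ·)).filter (OnLine μ ·) = {A} :=
    eq_singleton_iff_unique_mem.2 ⟨by simp [hAX, hAμ, hAlam], fun B hB => by
      simp only [mem_filter] at hB
      exact eq_of_onLine_of_not_sameLine hlam.1 hμ.1 hns hB.1.2 hAlam hB.2 hAμ⟩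
  have hsplit := card_filter_add_card_filter_not (s := X.filter (OnLine lam ·)) (OnLine μ ·)
  rw [hA, card_singleton, hlam.2, filter_filter] at hsplit
  refine ⟨hlam.1, ?_⟩
  rw [filter_filter, filter_congr fun B _ => and_comm]
  omega

lemma GCSet.filter_forall_not_onLine {s : ℕ} (R : Finset (MvPolynomial (Fin 2) ℝ))
    (X : Finset (ℝ × ℝ)) (hX : GCSet (s + R.card) X)
    (hmax : ∀ lam ∈ R, IsMaximalLine (s + R.card) X lam)
    (hR : (R : Set (MvPolynomial (Fin 2) ℝ)).Pairwise fun l₁ l₂ => ¬ SameLine l₁ l₂) :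
    GCSet s (X.filter fun A => ∀ μ ∈ R, ¬ OnLine μ A) := by
  induction R using Finset.induction_on generalizing X with
  | empty => simpa using hX
  | insert a R ha ih =>
    rw [card_insert_of_notMem ha, ← add_assoc] at hX hmax
    rw [coe_insert, Set.pairwise_insert] at hR
    have ha' := hmax a (mem_insert_self a R)
    have hrest := ih (X.filter (¬ OnLine a ·)) (hX.filter_not_onLine ha')
      (fun lam hlam => (hmax lam (mem_insert_of_mem hlam)).filter_not_onLine hX ha'
        (hR.2 lam hlam (by rintro rfl; exact ha hlam)).2) hR.1
    have hnodes : X.filter (fun A => ∀ μ ∈ insert a R, ¬ OnLine μ A) =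
        (X.filter (¬ OnLine a ·)).filter fun A => ∀ μ ∈ R, ¬ OnLine μ A := by
      rw [filter_filter]
      simp only [forall_mem_insert]
    rwa [hnodes]

section Lowering

variable {n : ℕ} {X : Finset (ℝ × ℝ)} {L : Finset (MvPolynomial (Fin 2) ℝ)}
  {l lam μ : MvPolynomial (Fin 2) ℝ}

noncomputable def loweringLines (n : ℕ) (X : Finset (ℝ × ℝ)) (l : MvPolynomial (Fin 2) ℝ)
    (L : Finset (MvPolynomial (Fin 2) ℝ)) : Finset (MvPolynomial (Fin 2) ℝ) :=
  L.filter fun μ => IsDisjointMax n X l μ ∨ IsAdjointMax n X l μ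

lemma IsDisjointMax.of_sameLine (h : IsDisjointMax n X l lam) (hs : SameLine lam μ)
    (hμ : IsMaximalLine n X μ) : IsDisjointMax n X l μ :=
  ⟨hμ, fun A hA hA' => h.2 A hA ⟨(hs A).2 hA'.1, hA'.2⟩⟩

lemma IsAdjointMax.of_sameLine (h : IsAdjointMax n X l lam) (hs : SameLine lam μ)
    (hμ : IsMaximalLine n X μ) : IsAdjointMax n X l μ :=
  let ⟨_, lam', h', hns, A, hA, h₁, h₂, h₃⟩ := h
  ⟨hμ, lam', h', fun hs' => hns fun P => (hs P).trans (hs' P), A, hA, (hs A).1 h₁, h₂, h₃⟩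

lemma IsMaximalLine.not_sameLine (hμ : IsMaximalLine n X μ) (hl : IsLinearPoly l)
    (hnotmax : ¬ IsMaximalLine n X l) : ¬ SameLine μ l :=
  fun hs => hnotmax (hμ.of_sameLine hs hl)

lemma lowering_eq_filter (hL : MaximalLinesRep n X L) :
    Lowering n X l = X.filter fun A => ∀ μ ∈ loweringLines n X l L, ¬ OnLine μ A := by
  refine filter_congr fun A _ => ⟨fun h μ hμ hμA => h ⟨μ, (mem_filter.1 hμ).2, hμA⟩, ?_⟩
  rintro h ⟨lam, hlam, hlamA⟩
  obtain ⟨μ, hμ, hs⟩ := hL.2.2 lam (hlam.elim And.left And.left)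
  exact h μ (mem_filter.2 ⟨hμ, hlam.imp (·.of_sameLine hs (hL.1 μ hμ))
    (·.of_sameLine hs (hL.1 μ hμ))⟩) ((hs A).1 hlamA)

lemma MaximalLinesRep.isAdjointMax_iff_not_is1mNode (hL : MaximalLinesRep n X L)
    (hl : IsLinearPoly l) (hnotmax : ¬ IsMaximalLine n X l) (hμ : μ ∈ L) {A : ℝ × ℝ}
    (hA : A ∈ X) (hμA : OnLine μ A) (hlA : OnLine l A) :
    IsAdjointMax n X l μ ↔ ¬ Is1mNode L A := by
  constructor
  · rintro ⟨-, lam', h', hns, B, -, hμB, h'B, hlB⟩ h1m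
    have hBA : B = A := eq_of_onLine_of_not_sameLine (hL.1 μ hμ).1 hl
      ((hL.1 μ hμ).not_sameLine hl hnotmax) hμB hμA hlB hlA
    subst hBA
    obtain ⟨ν, hν, hs⟩ := hL.2.2 lam' h'
    have hμν : μ = ν := card_le_one.1 h1m.le μ (mem_filter.2 ⟨hμ, hμA⟩) ν
      (mem_filter.2 ⟨hν, (hs B).1 h'B⟩)
    exact hns (hμν ▸ fun P => (hs P).symm)
  · intro h1m
    have hpos : 0 < (L.filter (OnLine · A)).card := card_pos.2 ⟨μ, mem_filter.2 ⟨hμ, hμA⟩⟩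
    have hgt : 1 < (L.filter (OnLine · A)).card := by
      unfold Is1mNode at h1m
      omega
    obtain ⟨ν, hν, hνμ⟩ := exists_mem_ne hgt μ
    obtain ⟨hνL, hνA⟩ := mem_filter.1 hν
    exact ⟨hL.1 μ hμ, ν, hL.1 ν hνL, fun hs => hνμ (hL.2.1 μ hμ ν hνL hs).symm, A, hA, hμA, hνA,
      hlA⟩

lemma MaximalLinesRep.card_filter_oneMNodes_onLine (hL : MaximalLinesRep n X L)
    (hl : IsLinearPoly l) (hnotmax : ¬ IsMaximalLine n X l)
    (hμ : μ ∈ L \ loweringLines n X l L) :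
    ((X.filter fun A => OnLine l A ∧ Is1mNode L A).filter (OnLine μ ·)).card = 1 := by
  obtain ⟨hμL, hμR⟩ := mem_sdiff.1 hμ
  simp only [loweringLines, mem_filter, hμL, true_and, not_or] at hμR
  obtain ⟨A, hA, hμA, hlA⟩ : ∃ A ∈ X, OnLine μ A ∧ OnLine l A := by
    by_contra! h
    exact hμR.1 ⟨hL.1 μ hμL, fun A hA h' => h A hA h'.1 h'.2⟩
  have h1m : Is1mNode L A :=
    not_not.1 fun h => hμR.2 ((hL.isAdjointMax_iff_not_is1mNode hl hnotmax hμL hA hμA hlA).2 h)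
  refine card_eq_one.2 ⟨A, eq_singleton_iff_unique_mem.2 ⟨by simp [hA, hlA, h1m, hμA], ?_⟩⟩
  intro B hB
  simp only [mem_filter] at hB
  exact eq_of_onLine_of_not_sameLine (hL.1 μ hμL).1 hl ((hL.1 μ hμL).not_sameLine hl hnotmax)
    hB.2 hμA hB.1.2.1 hlA

lemma MaximalLinesRep.card_filter_sdiff_loweringLines_onLine (hL : MaximalLinesRep n X L)
    (hl : IsLinearPoly l) (hnotmax : ¬ IsMaximalLine n X l) {A : ℝ × ℝ}
    (hA : A ∈ X.filter fun A => OnLine l A ∧ Is1mNode L A) :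
    ((L \ loweringLines n X l L).filter (OnLine · A)).card = 1 := by
  obtain ⟨hAX, hlA, h1m⟩ := mem_filter.1 hA
  obtain ⟨μ, hμ⟩ := card_eq_one.1 h1m
  obtain ⟨hμL, hμA⟩ := mem_filter.1 (hμ ▸ mem_singleton_self μ)
  have hμR : μ ∉ loweringLines n X l L := by
    simp only [loweringLines, mem_filter, hμL, true_and, not_or]
    exact ⟨fun h => h.2 A hAX ⟨hμA, hlA⟩,
      fun h => (hL.isAdjointMax_iff_not_is1mNode hl hnotmax hμL hAX hμA hlA).1 h h1m⟩
  refine card_eq_one.2 ⟨μ, eq_singleton_iff_unique_mem.2 ⟨by simp [hμL, hμR, hμA], ?_⟩⟩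
  intro ν hν
  simp only [mem_filter, mem_sdiff] at hν
  exact mem_singleton.1 (hμ ▸ mem_filter.2 ⟨hν.1.1, hν.2⟩)

lemma MaximalLinesRep.card_sdiff_loweringLines (hL : MaximalLinesRep n X L)
    (hl : IsLinearPoly l) (hnotmax : ¬ IsMaximalLine n X l) :
    (L \ loweringLines n X l L).card = (X.filter fun A => OnLine l A ∧ Is1mNode L A).card := by
  -- double counting the incidences between the kept lines and the `1_m`-nodes of `l`
  simpa using card_mul_eq_card_mul (fun μ A => OnLine μ A) (m := 1) (n := 1)
    (fun μ hμ => hL.card_filter_oneMNodes_onLine hl hnotmax hμ)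
    (fun A hA => hL.card_filter_sdiff_loweringLines_onLine hl hnotmax hA)

end Lowering

/-- If a non-maximal line `l` passes through exactly `k` `1_m`-nodes of a
`GC_n` set `X`, then the `l`-lowering `X̂(l)` is a `GC_s` set with
`s = def(X) + k - 2`, i.e. `s + #M(X) = n + k`. -/
theorem lowering_is_GC
    (n k s : ℕ) (X : Finset (ℝ × ℝ)) (hX : GCSet n X)
    (L : Finset (MvPolynomial (Fin 2) ℝ)) (hL : MaximalLinesRep n X L)
    (l : MvPolynomial (Fin 2) ℝ) (hl : IsLinearPoly l)
    (hnotmax : ¬ IsMaximalLine n X l)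
    (hk : (X.filter (fun A => OnLine l A ∧ Is1mNode L A)).card = k)
    (hs : s + L.card = n + k) :
    GCSet s (Lowering n X l) := by
  set R := loweringLines n X l L
  have hRL : R ⊆ L := filter_subset _ _
  have hRcard : s + R.card = n := by
    have hkept := card_sdiff_of_subset hRL
    rw [hL.card_sdiff_loweringLines hl hnotmax, hk] at hkept
    have := card_le_card hRL
    omega
  rw [lowering_eq_filter hL]
  refine GCSet.filter_forall_not_onLine R X (hRcard ▸ hX) (fun μ hμ => hRcard ▸ hL.1 μ (hRL hμ)) ?_
  exact fun μ hμ ν hν hne hsame => hne (hL.2.1 μ (hRL hμ) ν (hRL hν) hsame)
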